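/- arXiv:1908.03354 — 6 statements merged into one kernel-verified Lean document; each statement's English description precedes it below -/
import Mathlib

section
/- Let μ > 0, v_+ < 0, r_0 > 0, and let ψ : [r_0, ∞) → ℝ be continuous with ψ − v_+ ∈ L¹([r_0, ∞)). Let f ∈ C¹([r_0, ∞)) satisfy f(r_0) < 0, f′ < 0 on (r_0, ∞), and f′ ∈ L¹([r_0, ∞)). Define A(r) = exp((1/μ)∫_{r_0}^r ψ(s) ds) and B(r) = ∫_r^∞ |f(s)| A(s) ds. Then B(r) ≤ (μ(|f(r_0)| + ‖f′‖_{L¹})/|v_+|) · exp((1/μ)‖ψ − v_+‖_{L¹} − (|v_+|/μ)(r − r_0)) for all r ≥ r_0, and in particular B(r) → 0 as r → ∞. -/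
/-! On `[r₀, ∞)` the fundamental theorem of calculus gives `|f| ≤ |f r₀| + ‖f'‖₁`, and writing
`ψ = (ψ - v₊) + v₊` gives `∫_{r₀}^s ψ ≤ ‖ψ - v₊‖₁ + v₊ (s - r₀)`. Hence the integrand of `B` is
dominated by a multiple of `exp (-(|v₊|/μ) (s - r₀))`, whose tail integrals are explicit. -/

open MeasureTheory Filter Set Real

lemma abs_intervalIntegral_le_setIntegral_abs_Ici {g : ℝ → ℝ} {a b : ℝ}
    (hg : IntegrableOn g (Ici a)) (hab : a ≤ b) :
    |∫ t in a..b, g t| ≤ ∫ t in Ici a, |g t| := by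
  calc |∫ t in a..b, g t| ≤ ∫ t in a..b, |g t| := intervalIntegral.abs_integral_le_integral_abs hab
    _ = ∫ t in Ioc a b, |g t| := intervalIntegral.integral_of_le hab
    _ ≤ ∫ t in Ici a, |g t| :=
      setIntegral_mono_set hg.abs (.of_forall fun _ => abs_nonneg _)
        (Ioc_subset_Ioi_self.trans Ioi_subset_Ici_self).eventuallyLE

lemma abs_le_abs_add_integral_abs_deriv {f f' : ℝ → ℝ} {a x : ℝ}
    (hf : ∀ t ∈ Ici a, HasDerivAt f (f' t) t) (hf' : IntegrableOn f' (Ici a)) (hx : a ≤ x) :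
    |f x| ≤ |f a| + ∫ t in Ici a, |f' t| := by
  have hsub : uIcc a x ⊆ Ici a := by
    rw [uIcc_of_le hx]; exact Icc_subset_Ici_self
  have hftc : ∫ t in a..x, f' t = f x - f a :=
    intervalIntegral.integral_eq_sub_of_hasDerivAt (fun t ht => hf t (hsub ht))
      ((hf'.mono_set hsub).intervalIntegrable)
  calc |f x| = |f a + ∫ t in a..x, f' t| := by rw [hftc, add_sub_cancel]
    _ ≤ |f a| + |∫ t in a..x, f' t| := abs_add_le _ _
    _ ≤ |f a| + ∫ t in Ici a, |f' t| :=
      add_le_add_right (abs_intervalIntegral_le_setIntegral_abs_Ici hf' hx) _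

lemma intervalIntegral_le_of_integrableOn_sub_const {ψ : ℝ → ℝ} {v a b : ℝ}
    (hψ : IntegrableOn (fun t => ψ t - v) (Ici a)) (hab : a ≤ b) :
    ∫ t in a..b, ψ t ≤ (∫ t in Ici a, |ψ t - v|) + v * (b - a) := by
  have hψv : IntervalIntegrable (fun t => ψ t - v) volume a b :=
    (hψ.mono_set (by rw [uIcc_of_le hab]; exact Icc_subset_Ici_self)).intervalIntegrable
  have hψi : IntervalIntegrable ψ volume a b := by
    simpa using hψv.add (intervalIntegrable_const (c := v))
  have hsplit : ∫ t in a..b, ψ t = (∫ t in a..b, (ψ t - v)) + v * (b - a) := by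
    rw [intervalIntegral.integral_sub hψi intervalIntegrable_const,
      intervalIntegral.integral_const, smul_eq_mul]
    ring
  rw [hsplit]
  gcongr
  exact (le_abs_self _).trans (abs_intervalIntegral_le_setIntegral_abs_Ici hψ hab)

lemma setIntegral_Ici_le_of_abs_le_exp {h : ℝ → ℝ} {C c a r : ℝ} (hc : 0 < c)
    (hh : ∀ s, r ≤ s → |h s| ≤ C * exp (-c * (s - a))) :
    ∫ s in Ici r, h s ≤ C / c * exp (-c * (r - a)) := by
  have hexp : ∀ s, C * exp (-c * (s - a)) = C * exp (c * a) * exp (-c * s) := fun s => by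
    rw [mul_assoc, ← exp_add]; ring_nf
  have hint : IntegrableOn (fun s => C * exp (-c * (s - a))) (Ici r) := by
    simp_rw [hexp]
    rw [integrableOn_Ici_iff_integrableOn_Ioi]
    exact (integrableOn_exp_mul_Ioi (neg_lt_zero.2 hc) r).const_mul _
  calc ∫ s in Ici r, h s ≤ ‖∫ s in Ici r, h s‖ := le_abs_self _
    _ ≤ ∫ s in Ici r, C * exp (-c * (s - a)) :=
      norm_integral_le_of_norm_le hint ((ae_restrict_iff' measurableSet_Ici).2
        (.of_forall fun s hs => hh s hs))
    _ = C / c * exp (-c * (r - a)) := by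
      simp_rw [hexp, integral_Ici_eq_integral_Ioi, integral_const_mul,
        integral_exp_mul_Ioi (neg_lt_zero.2 hc)]
      rw [neg_div_neg_eq, ← mul_div_assoc, ← hexp, mul_div_right_comm]

lemma tendsto_const_mul_exp_sub_mul_sub_atTop (C b c a : ℝ) (hc : 0 < c) :
    Tendsto (fun r => C * exp (b - c * (r - a))) atTop (nhds 0) := by
  have h : Tendsto (fun r => b - c * (r - a)) atTop atBot :=
    tendsto_atBot_add_const_left _ b (tendsto_neg_atTop_atBot.comp
      ((tendsto_atTop_add_const_right _ _ tendsto_id).const_mul_atTop hc))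
  simpa using (tendsto_exp_atBot.comp h).const_mul C

theorem stmt_3_general (μ vp r0 : ℝ) (hμ : 0 < μ) (hvp : vp < 0)
    (ψ : ℝ → ℝ)
    (hψint : MeasureTheory.IntegrableOn (fun s => ψ s - vp) (Set.Ici r0))
    (f f' : ℝ → ℝ) (hf : ∀ r ∈ Set.Ici r0, HasDerivAt f (f' r) r)
    (hf'int : MeasureTheory.IntegrableOn f' (Set.Ici r0))
    (A B : ℝ → ℝ)
    (hA : ∀ r, A r = Real.exp ((1 / μ) * ∫ s in r0..r, ψ s))
    (hB : ∀ r, B r = ∫ s in Set.Ici r, |f s| * A s) :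
    (∀ r, r0 ≤ r → B r ≤ μ * (|f r0| + ∫ s in Set.Ici r0, |f' s|) / |vp| *
      Real.exp ((1 / μ) * (∫ s in Set.Ici r0, |ψ s - vp|) - (|vp| / μ) * (r - r0))) ∧
    Filter.Tendsto B Filter.atTop (nhds 0) := by
  set K := ∫ s in Ici r0, |ψ s - vp|
  set M := |f r0| + ∫ s in Ici r0, |f' s|
  have hc : 0 < |vp| / μ := div_pos (abs_pos.2 hvp.ne) hμ
  have hA_nonneg : ∀ s, 0 ≤ A s := fun s => by rw [hA]; positivity
  have hA_le : ∀ s, r0 ≤ s → A s ≤ exp (K / μ) * exp (-(|vp| / μ) * (s - r0)) := fun s hs => by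
    rw [hA, ← exp_add]
    gcongr
    calc 1 / μ * ∫ t in r0..s, ψ t ≤ 1 / μ * (K + vp * (s - r0)) :=
          by gcongr; exact intervalIntegral_le_of_integrableOn_sub_const hψint hs
      _ = K / μ + -(|vp| / μ) * (s - r0) := by rw [abs_of_neg hvp]; ring
  have hbound (r : ℝ) (hr : r0 ≤ r) : B r ≤ μ * M / |vp| * exp (K / μ - |vp| / μ * (r - r0)) := by
    calc B r ≤ M * exp (K / μ) / (|vp| / μ) * exp (-(|vp| / μ) * (r - r0)) := by
          rw [hB]
          refine setIntegral_Ici_le_of_abs_le_exp hc fun s hs => ?_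
          rw [abs_mul, abs_abs, abs_of_nonneg (hA_nonneg s), mul_assoc]
          exact mul_le_mul (abs_le_abs_add_integral_abs_deriv hf hf'int (hr.trans hs))
            (hA_le s (hr.trans hs)) (hA_nonneg s) (by positivity)
      _ = μ * M / |vp| * exp (K / μ - |vp| / μ * (r - r0)) := by
          rw [sub_eq_add_neg (K / μ), exp_add, ← neg_mul]; field_simp
  refine ⟨fun r hr => by simpa only [one_div_mul_eq_div] using hbound r hr, ?_⟩
  have hB_nonneg : ∀ r, 0 ≤ B r := fun r => by
    rw [hB]
    exact setIntegral_nonneg measurableSet_Ici fun s _ => mul_nonneg (abs_nonneg _) (hA_nonneg s)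
  exact squeeze_zero' (.of_forall hB_nonneg) (eventually_atTop.2 ⟨r0, hbound⟩)
    (tendsto_const_mul_exp_sub_mul_sub_atTop _ _ _ _ hc)

theorem stmt_3 (μ vp r0 : ℝ) (hμ : 0 < μ) (hvp : vp < 0) (hr0 : 0 < r0)
    (ψ : ℝ → ℝ) (hψc : ContinuousOn ψ (Set.Ici r0))
    (hψint : MeasureTheory.IntegrableOn (fun s => ψ s - vp) (Set.Ici r0))
    (f f' : ℝ → ℝ) (hf : ∀ r ∈ Set.Ici r0, HasDerivAt f (f' r) r)
    (hf'c : ContinuousOn f' (Set.Ici r0))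
    (hfr0 : f r0 < 0) (hf'neg : ∀ r, r0 < r → f' r < 0)
    (hf'int : MeasureTheory.IntegrableOn f' (Set.Ici r0))
    (A B : ℝ → ℝ)
    (hA : ∀ r, A r = Real.exp ((1 / μ) * ∫ s in r0..r, ψ s))
    (hB : ∀ r, B r = ∫ s in Set.Ici r, |f s| * A s) :
    (∀ r, r0 ≤ r → B r ≤ μ * (|f r0| + ∫ s in Set.Ici r0, |f' s|) / |vp| *
      Real.exp ((1 / μ) * (∫ s in Set.Ici r0, |ψ s - vp|) - (|vp| / μ) * (r - r0))) ∧
    Filter.Tendsto B Filter.atTop (nhds 0) :=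
  stmt_3_general μ vp r0 hμ hvp ψ hψint f f' hf hf'int A B hA hB
end

section
/- Let μ > 0, v_+ < 0, r_0 > 0, and ψ : [r_0, ∞) → ℝ continuous with ψ − v_+ ∈ L¹([r_0, ∞)). Define χ(r) = exp(−(1/μ)∫_{r_0}^r ψ) · ∫_r^∞ (2/r_0 − 1/s) exp((1/μ)∫_{r_0}^s ψ) ds. Then χ(r) > 0 for all r ≥ r_0, and lim_{r→∞} χ(r) = (μ/|v_+|) · lim_{r→∞}(2/r_0 − 1/r) = 2μ/(r_0 |v_+|). In particular there exist constants 0 < c_1 ≤ c_2 < ∞ with c_1 ≤ χ(r) ≤ c_2 for all r ≥ r_0. -/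
open MeasureTheory Real Set Filter Topology

lemma exp_decay_integrableOn (b a : ℝ) (hb : 0 < b) :
    IntegrableOn (fun x : ℝ => Real.exp (-b * (x - a))) (Ici a) := by
  rw [integrableOn_Ici_iff_integrableOn_Ioi]
  have : (fun x : ℝ => Real.exp (-b * (x - a))) = fun x => Real.exp (b * a) * Real.exp (-b * x) := by
    ext x; rw [← Real.exp_add]; ring_nf
  rw [this]
  exact (exp_neg_integrableOn_Ioi a hb).const_mul _

lemma exp_decay_integral (b a : ℝ) (hb : 0 < b) :
    ∫ x in Ici a, Real.exp (-b * (x - a)) = 1 / b := by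
  rw [integral_Ici_eq_integral_Ioi]
  have h := MeasureTheory.integral_Ioi_of_hasDerivAt_of_tendsto
    (f := fun x => -(1/b) * Real.exp (-b * (x - a)))
    (f' := fun x => Real.exp (-b * (x - a))) (a := a) (m := 0)
    ?_ ?_ ((exp_decay_integrableOn b a hb).mono_set Ioi_subset_Ici_self) ?_
  · rw [h]; simp [hb.ne']
  · exact (Continuous.continuousWithinAt (by continuity))
  · intro x _
    have h1 : HasDerivAt (fun x : ℝ => -b * (x - a)) (-b) x := by
      simpa using ((hasDerivAt_id x).sub_const a).const_mul (-b)
    have h2 := (h1.exp).const_mul (-(1/b))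
    convert h2 using 1
    · rfl
    have hk : -(1/b) * -b = (1:ℝ) := by rw [neg_mul_neg, one_div, inv_mul_cancel₀ hb.ne']
    linear_combination (-Real.exp (-b * (x - a))) * hk
  · have h1 : Tendsto (fun x : ℝ => -b * (x - a)) atTop atBot := by
      apply Tendsto.const_mul_atTop_of_neg (by linarith : -b < 0)
      exact tendsto_atTop_add_const_right _ _ tendsto_id
    have h2 : Tendsto (fun x : ℝ => Real.exp (-b * (x - a))) atTop (𝓝 0) :=
      Real.tendsto_exp_atBot.comp h1
    simpa using h2.const_mul (-(1/b))

theorem stmt_6 (μ vp r0 : ℝ) (hμ : 0 < μ) (hvp : vp < 0) (hr0 : 0 < r0)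
    (ψ : ℝ → ℝ) (hψc : ContinuousOn ψ (Set.Ici r0))
    (hψint : MeasureTheory.IntegrableOn (fun s => ψ s - vp) (Set.Ici r0))
    (χ : ℝ → ℝ)
    (hχ : ∀ r, χ r = Real.exp (-(1 / μ) * ∫ s in r0..r, ψ s) *
      ∫ s in Set.Ici r, (2 / r0 - 1 / s) * Real.exp ((1 / μ) * ∫ τ in r0..s, ψ τ)) :
    (∀ r, r0 ≤ r → 0 < χ r) ∧
    Filter.Tendsto χ Filter.atTop (nhds (2 * μ / (r0 * |vp|))) ∧
    ∃ c1 c2 : ℝ, 0 < c1 ∧ c1 ≤ c2 ∧ ∀ r, r0 ≤ r → c1 ≤ χ r ∧ χ r ≤ c2 := by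
  set b : ℝ := -vp / μ with hb_def
  have hb : 0 < b := div_pos (by linarith) hμ
  set F : ℝ → ℝ := fun s => ∫ τ in r0..s, ψ τ with hFdef
  set G : ℝ → ℝ := fun s => (2 / r0 - 1 / s) * Real.exp ((1 / μ) * F s) with hGdef
  set ε : ℝ → ℝ := fun r => ∫ t in Set.Ici r, |ψ t - vp| with hεdef
  set M : ℝ := ε r0 with hMdef
  have hψii : ∀ a c : ℝ, r0 ≤ a → r0 ≤ c → IntervalIntegrable ψ volume a c := by
    intro a c ha hc
    apply (hψc.mono ?_).intervalIntegrable
    intro x hx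
    exact le_trans (le_min ha hc) hx.1
  have habs : IntegrableOn (fun t => |ψ t - vp|) (Ici r0) := hψint.abs
  have hεnn : ∀ r, 0 ≤ ε r := by
    intro r
    exact setIntegral_nonneg measurableSet_Ici (fun t _ => abs_nonneg _)
  have hεM : ∀ r, r0 ≤ r → ε r ≤ M := by
    intro r hr
    apply setIntegral_mono_set habs
    · exact Eventually.of_forall (fun t => abs_nonneg _)
    · exact HasSubset.Subset.eventuallyLE (Ici_subset_Ici.2 hr)
  have hMnn : 0 ≤ M := hεnn r0
  -- key estimate on the exponent
  have hkey : ∀ r s : ℝ, r0 ≤ r → r ≤ s → |(F s - F r) - vp * (s - r)| ≤ ε r := by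
    intro r s hr hs
    have hii1 : IntervalIntegrable ψ volume r0 r := hψii r0 r le_rfl hr
    have hii2 : IntervalIntegrable ψ volume r s := hψii r s hr (hr.trans hs)
    have hFs : F s - F r = ∫ τ in r..s, ψ τ := by
      simp only [hFdef]
      rw [← intervalIntegral.integral_add_adjacent_intervals hii1 hii2]
      ring
    have hsub : (∫ τ in r..s, ψ τ) - vp * (s - r) = ∫ τ in r..s, (ψ τ - vp) := by
      rw [intervalIntegral.integral_sub hii2 intervalIntegrable_const,
        intervalIntegral.integral_const, smul_eq_mul]
      ring
    rw [hFs, hsub]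
    calc |∫ τ in r..s, (ψ τ - vp)| ≤ ∫ τ in r..s, |ψ τ - vp| :=
          intervalIntegral.abs_integral_le_integral_abs hs
      _ = ∫ τ in Ioc r s, |ψ τ - vp| := intervalIntegral.integral_of_le hs
      _ ≤ ∫ τ in Ici r, |ψ τ - vp| := by
          apply setIntegral_mono_set (habs.mono_set (Ici_subset_Ici.2 hr))
          · exact Eventually.of_forall (fun t => abs_nonneg _)
          · exact HasSubset.Subset.eventuallyLE (fun x hx => le_of_lt hx.1)
  have hFcont : ContinuousOn F (Ici r0) := by
    intro x hx
    have hx1 : x < x + 1 := by linarith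
    have h1 : ContinuousWithinAt F (Icc r0 (x + 1)) x := by
      apply intervalIntegral.continuousWithinAt_primitive (measure_singleton x)
      exact hψii _ _ (le_min le_rfl le_rfl) (le_max_left r0 (x + 1))
    apply h1.mono_of_mem_nhdsWithin
    rw [mem_nhdsWithin]
    exact ⟨Iio (x + 1), isOpen_Iio, lt_of_le_of_lt (le_refl x) hx1,
      fun y hy => ⟨hy.2, le_of_lt hy.1⟩⟩
  have hGcont : ContinuousOn G (Ici r0) := by
    have h1 : ContinuousOn (fun s : ℝ => 1 / s) (Ici r0) := by
      apply ContinuousOn.div continuousOn_const continuousOn_id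
      intro x hx
      exact ne_of_gt (lt_of_lt_of_le hr0 hx)
    exact (continuousOn_const.sub h1).mul
      (Real.continuous_exp.comp_continuousOn (continuousOn_const.mul hFcont))
  -- pointwise bounds for G
  have hGub : ∀ r s : ℝ, r0 ≤ r → r ≤ s →
      G s ≤ (2 / r0) * Real.exp ((1 / μ) * F r) * Real.exp (ε r / μ) * Real.exp (-b * (s - r)) := by
    intro r s hr hs
    have hs0 : r0 ≤ s := hr.trans hs
    have hs0' : 0 < s := lt_of_lt_of_le hr0 hs0
    have hkey' := (abs_le.1 (hkey r s hr hs)).2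
    have h1 : (1 / μ) * F s ≤ (1 / μ) * F r + ε r / μ + (-b * (s - r)) := by
      have h2 : F s ≤ F r + vp * (s - r) + ε r := by linarith
      have h3 := mul_le_mul_of_nonneg_left h2 (le_of_lt (one_div_pos.2 hμ))
      calc (1 / μ) * F s ≤ (1 / μ) * (F r + vp * (s - r) + ε r) := h3
        _ = (1 / μ) * F r + ε r / μ + (-b * (s - r)) := by
            rw [hb_def]; field_simp; ring
    have hexp : Real.exp ((1 / μ) * F s) ≤
        Real.exp ((1 / μ) * F r) * Real.exp (ε r / μ) * Real.exp (-b * (s - r)) := by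
      rw [← Real.exp_add, ← Real.exp_add]
      exact Real.exp_le_exp.2 h1
    have hg1 : 2 / r0 - 1 / s ≤ 2 / r0 := by
      have : 0 ≤ 1 / s := by positivity
      linarith
    calc G s = (2 / r0 - 1 / s) * Real.exp ((1 / μ) * F s) := rfl
      _ ≤ (2 / r0) * (Real.exp ((1 / μ) * F r) * Real.exp (ε r / μ) * Real.exp (-b * (s - r))) :=
          mul_le_mul hg1 hexp (Real.exp_pos _).le (by positivity)
      _ = _ := by ring
  have hGlb : ∀ r s : ℝ, r0 ≤ r → r ≤ s →
      (2 / r0 - 1 / r) * Real.exp ((1 / μ) * F r) * Real.exp (-(ε r) / μ) *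
        Real.exp (-b * (s - r)) ≤ G s := by
    intro r s hr hs
    have hr0' : 0 < r := lt_of_lt_of_le hr0 hr
    have hs0 : r0 ≤ s := hr.trans hs
    have hkey' := (abs_le.1 (hkey r s hr hs)).1
    have h1 : (1 / μ) * F r + (-(ε r)) / μ + (-b * (s - r)) ≤ (1 / μ) * F s := by
      have h2 : F r + vp * (s - r) - ε r ≤ F s := by linarith
      have h3 := mul_le_mul_of_nonneg_left h2 (le_of_lt (one_div_pos.2 hμ))
      calc (1 / μ) * F r + (-(ε r)) / μ + (-b * (s - r))
          = (1 / μ) * (F r + vp * (s - r) - ε r) := by rw [hb_def]; field_simp; ring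
        _ ≤ (1 / μ) * F s := h3
    have hexp : Real.exp ((1 / μ) * F r) * Real.exp (-(ε r) / μ) * Real.exp (-b * (s - r)) ≤
        Real.exp ((1 / μ) * F s) := by
      rw [← Real.exp_add, ← Real.exp_add]
      exact Real.exp_le_exp.2 h1
    have h1s : 1 / s ≤ 1 / r := one_div_le_one_div_of_le hr0' hs
    have h1r : 1 / r ≤ 1 / r0 := one_div_le_one_div_of_le hr0 hr
    have heq : 2 / r0 - 1 / r0 = 1 / r0 := by ring
    have hg0 : 0 ≤ 2 / r0 - 1 / r := by
      have : 0 < 1 / r0 := by positivity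
      linarith
    have hg : 2 / r0 - 1 / r ≤ 2 / r0 - 1 / s := by linarith
    calc (2 / r0 - 1 / r) * Real.exp ((1 / μ) * F r) * Real.exp (-(ε r) / μ) *
          Real.exp (-b * (s - r))
        = (2 / r0 - 1 / r) *
          (Real.exp ((1 / μ) * F r) * Real.exp (-(ε r) / μ) * Real.exp (-b * (s - r))) := by ring
      _ ≤ (2 / r0 - 1 / s) * Real.exp ((1 / μ) * F s) :=
          mul_le_mul hg hexp (by positivity) (le_trans hg0 hg)
      _ = G s := rfl
  have hGnn : ∀ r s : ℝ, r0 ≤ r → r ≤ s → 0 ≤ G s := by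
    intro r s hr hs
    have hs0 : r0 ≤ s := hr.trans hs
    have h1s : 1 / s ≤ 1 / r0 := one_div_le_one_div_of_le hr0 hs0
    have heq : 2 / r0 - 1 / r0 = 1 / r0 := by ring
    have h3 : 0 < 1 / r0 := by positivity
    have hg0 : 0 ≤ 2 / r0 - 1 / s := by linarith
    simp only [hGdef]
    exact mul_nonneg hg0 (Real.exp_pos _).le
  -- integrability of G
  have hGint : ∀ r : ℝ, r0 ≤ r → IntegrableOn G (Ici r) := by
    intro r hr
    have hint : IntegrableOn
        (fun s => (2 / r0) * Real.exp ((1 / μ) * F r) * Real.exp (ε r / μ) *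
          Real.exp (-b * (s - r))) (Ici r) :=
      (exp_decay_integrableOn b r hb).const_mul _
    apply Integrable.mono hint
    · exact (hGcont.mono (Ici_subset_Ici.2 hr)).aestronglyMeasurable measurableSet_Ici
    · refine (ae_restrict_iff' measurableSet_Ici).2 (Eventually.of_forall fun s hs => ?_)
      rw [Real.norm_eq_abs, Real.norm_eq_abs, abs_of_nonneg (hGnn r s hr hs),
        abs_of_nonneg (by positivity)]
      exact hGub r s hr hs
  -- integral bounds
  have hIub : ∀ r : ℝ, r0 ≤ r →
      (∫ s in Ici r, G s) ≤
        (2 / r0) * Real.exp ((1 / μ) * F r) * Real.exp (ε r / μ) * (1 / b) := by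
    intro r hr
    have h := setIntegral_mono_on (hGint r hr)
      ((exp_decay_integrableOn b r hb).const_mul
        ((2 / r0) * Real.exp ((1 / μ) * F r) * Real.exp (ε r / μ)))
      measurableSet_Ici (fun s hs => hGub r s hr hs)
    rwa [MeasureTheory.integral_const_mul, exp_decay_integral b r hb] at h
  have hIlb : ∀ r : ℝ, r0 ≤ r →
      (2 / r0 - 1 / r) * Real.exp ((1 / μ) * F r) * Real.exp (-(ε r) / μ) * (1 / b) ≤
        ∫ s in Ici r, G s := by
    intro r hr
    have h := setIntegral_mono_on
      ((exp_decay_integrableOn b r hb).const_mul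
        ((2 / r0 - 1 / r) * Real.exp ((1 / μ) * F r) * Real.exp (-(ε r) / μ)))
      (hGint r hr) measurableSet_Ici (fun s hs => hGlb r s hr hs)
    rwa [MeasureTheory.integral_const_mul, exp_decay_integral b r hb] at h
  -- bounds on χ
  have hχr : ∀ r : ℝ, χ r = Real.exp (-(1 / μ) * F r) * ∫ s in Ici r, G s := fun r => hχ r
  have hχub : ∀ r : ℝ, r0 ≤ r → χ r ≤ (2 / r0) * Real.exp (ε r / μ) * (1 / b) := by
    intro r hr
    rw [hχr r]
    have hE := Real.exp_pos (-(1 / μ) * F r)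
    calc Real.exp (-(1 / μ) * F r) * ∫ s in Ici r, G s
        ≤ Real.exp (-(1 / μ) * F r) *
          ((2 / r0) * Real.exp ((1 / μ) * F r) * Real.exp (ε r / μ) * (1 / b)) :=
          mul_le_mul_of_nonneg_left (hIub r hr) hE.le
      _ = (2 / r0) * Real.exp (ε r / μ) * (1 / b) := by
          rw [neg_mul, Real.exp_neg]
          field_simp
  have hχlb : ∀ r : ℝ, r0 ≤ r →
      (2 / r0 - 1 / r) * Real.exp (-(ε r) / μ) * (1 / b) ≤ χ r := by
    intro r hr
    rw [hχr r]
    have hE := Real.exp_pos (-(1 / μ) * F r)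
    calc (2 / r0 - 1 / r) * Real.exp (-(ε r) / μ) * (1 / b)
        = Real.exp (-(1 / μ) * F r) *
          ((2 / r0 - 1 / r) * Real.exp ((1 / μ) * F r) * Real.exp (-(ε r) / μ) * (1 / b)) := by
          rw [neg_mul, Real.exp_neg]
          field_simp
      _ ≤ Real.exp (-(1 / μ) * F r) * ∫ s in Ici r, G s :=
          mul_le_mul_of_nonneg_left (hIlb r hr) hE.le
  -- uniform constants
  have hc1 : ∀ r : ℝ, r0 ≤ r → (1 / r0) * Real.exp (-M / μ) * (1 / b) ≤ χ r := by
    intro r hr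
    refine le_trans ?_ (hχlb r hr)
    have h1r : 1 / r ≤ 1 / r0 := one_div_le_one_div_of_le hr0 hr
    have heq : 2 / r0 - 1 / r0 = 1 / r0 := by ring
    have hA : (1 : ℝ) / r0 ≤ 2 / r0 - 1 / r := by linarith
    have hB : Real.exp (-M / μ) ≤ Real.exp (-(ε r) / μ) :=
      Real.exp_le_exp.2 ((div_le_div_iff_of_pos_right hμ).2 (neg_le_neg (hεM r hr)))
    apply mul_le_mul_of_nonneg_right _ (by positivity)
    exact mul_le_mul hA hB (Real.exp_pos _).le (le_trans (by positivity) hA)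
  have hc2 : ∀ r : ℝ, r0 ≤ r → χ r ≤ (2 / r0) * Real.exp (M / μ) * (1 / b) := by
    intro r hr
    refine le_trans (hχub r hr) ?_
    apply mul_le_mul_of_nonneg_right _ (by positivity)
    exact mul_le_mul_of_nonneg_left
      (Real.exp_le_exp.2 ((div_le_div_iff_of_pos_right hμ).2 (hεM r hr))) (by positivity)
  have hε0 : Tendsto ε atTop (𝓝 0) := by
    have h1 : Tendsto (fun r => ∫ t in r0..r, |ψ t - vp|) atTop (𝓝 M) := by
      have h := MeasureTheory.intervalIntegral_tendsto_integral_Ioi r0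
        (habs.mono_set Ioi_subset_Ici_self) tendsto_id
      have hM' : M = ∫ t in Ioi r0, |ψ t - vp| := by
        rw [hMdef, hεdef]; exact integral_Ici_eq_integral_Ioi
      rw [hM']
      simpa using h
    have h2 : ∀ r, r0 ≤ r → ε r = M - ∫ t in r0..r, |ψ t - vp| := by
      intro r hr
      have hd : Disjoint (Ioc r0 r) (Ioi r) := Ioc_disjoint_Ioi_same
      have hsplit : (∫ t in Ioc r0 r, |ψ t - vp|) + ∫ t in Ioi r, |ψ t - vp| =
          ∫ t in Ioi r0, |ψ t - vp| := by
        rw [← setIntegral_union hd measurableSet_Ioi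
          (habs.mono_set (fun x hx => le_of_lt hx.1))
          (habs.mono_set (fun x hx => hr.trans (le_of_lt hx)))]
        rw [Ioc_union_Ioi_eq_Ioi hr]
      have he1 : ε r = ∫ t in Ioi r, |ψ t - vp| := by
        rw [hεdef]; exact integral_Ici_eq_integral_Ioi
      have he2 : M = ∫ t in Ioi r0, |ψ t - vp| := by
        rw [hMdef, hεdef]; exact integral_Ici_eq_integral_Ioi
      have he3 : (∫ t in r0..r, |ψ t - vp|) = ∫ t in Ioc r0 r, |ψ t - vp| :=
        intervalIntegral.integral_of_le hr
      rw [he1, he2, he3]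
      linarith
    have h3 : Tendsto (fun r => M - ∫ t in r0..r, |ψ t - vp|) atTop (𝓝 0) := by
      simpa using (tendsto_const_nhds (x := M)).sub h1
    exact Tendsto.congr'
      (by filter_upwards [eventually_ge_atTop r0] with r hr using (h2 r hr).symm) h3
  refine ⟨?_, ?_, ?_⟩
  · intro r hr
    refine lt_of_lt_of_le ?_ (hc1 r hr)
    positivity
  · -- the limit
    have hinv : Tendsto (fun r : ℝ => 1 / r) atTop (𝓝 0) := by
      simpa [one_div] using tendsto_inv_atTop_zero
    have hexp1 : Tendsto (fun r => Real.exp (-(ε r) / μ)) atTop (𝓝 1) := by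
      have h := (Real.continuous_exp.tendsto 0).comp (by simpa using hε0.neg.div_const μ)
      simpa [Function.comp_def] using h
    have hexp2 : Tendsto (fun r => Real.exp (ε r / μ)) atTop (𝓝 1) := by
      have h := (Real.continuous_exp.tendsto 0).comp (by simpa using hε0.div_const μ)
      simpa [Function.comp_def] using h
    have hvp' : vp ≠ 0 := ne_of_lt hvp
    have hval : 2 * μ / (r0 * |vp|) = 2 / r0 * 1 * (1 / b) := by
      rw [abs_of_neg hvp, hb_def]
      field_simp
    have hval2 : 2 * μ / (r0 * |vp|) = (2 / r0 - 0) * 1 * (1 / b) := by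
      rw [hval]; ring
    have hlow : Tendsto (fun r => (2 / r0 - 1 / r) * Real.exp (-(ε r) / μ) * (1 / b)) atTop
        (𝓝 (2 * μ / (r0 * |vp|))) := by
      rw [hval2]
      exact ((tendsto_const_nhds.sub hinv).mul hexp1).mul tendsto_const_nhds
    have hupp : Tendsto (fun r => (2 / r0) * Real.exp (ε r / μ) * (1 / b)) atTop
        (𝓝 (2 * μ / (r0 * |vp|))) := by
      rw [hval]
      exact (tendsto_const_nhds.mul hexp2).mul tendsto_const_nhds
    apply tendsto_of_tendsto_of_tendsto_of_le_of_le' hlow hupp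
    · filter_upwards [eventually_ge_atTop r0] with r hr using hχlb r hr
    · filter_upwards [eventually_ge_atTop r0] with r hr using hχub r hr
  · refine ⟨(1 / r0) * Real.exp (-M / μ) * (1 / b), (2 / r0) * Real.exp (M / μ) * (1 / b),
      by positivity, ?_, fun r hr => ⟨hc1 r hr, hc2 r hr⟩⟩
    have h3 : (0:ℝ) < 1 / r0 := by positivity
    have heq : 2 / r0 - 1 / r0 = 1 / r0 := by ring
    have h1 : (1 : ℝ) / r0 ≤ 2 / r0 := by linarith
    have h2 : Real.exp (-M / μ) ≤ Real.exp (M / μ) :=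
      Real.exp_le_exp.2 ((div_le_div_iff_of_pos_right hμ).2 (by linarith))
    exact mul_le_mul_of_nonneg_right
      (mul_le_mul h1 h2 (Real.exp_pos _).le (by positivity)) (by positivity)
end

section
/- Let r_0 > 0 and β ∈ ℝ with 0 ≤ β. Define A_β(r) = ⟨r⟩/(2r²) + β·(r/⟨r⟩)·(1/r_0 − 1/(2r)), where ⟨r⟩ = √(1+r²). Then A_β(r) ≥ β/(2⟨r_0⟩) for all r ≥ r_0. -/
theorem stmt_9 (r0 β : ℝ) (hr0 : 0 < r0) (hβ : 0 ≤ β) :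
    ∀ r, r0 ≤ r →
      β / (2 * Real.sqrt (1 + r0 ^ 2)) ≤
        Real.sqrt (1 + r ^ 2) / (2 * r ^ 2) +
          β * (r / Real.sqrt (1 + r ^ 2)) * (1 / r0 - 1 / (2 * r)) := by
  intro r hr
  have hrpos : 0 < r := lt_of_lt_of_le hr0 hr
  set s0 := Real.sqrt (1 + r0 ^ 2) with hs0def
  set s := Real.sqrt (1 + r ^ 2) with hsdef
  have hs0pos : 0 < s0 := Real.sqrt_pos.mpr (by positivity)
  have hspos : 0 < s := Real.sqrt_pos.mpr (by positivity)
  have hs0sq : s0 ^ 2 = 1 + r0 ^ 2 := Real.sq_sqrt (by positivity)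
  have hssq : s ^ 2 = 1 + r ^ 2 := Real.sq_sqrt (by positivity)
  -- key monotonicity: r0/s0 ≤ r/s
  have hkey : r0 / s0 ≤ r / s := by
    rw [div_le_div_iff₀ hs0pos hspos]
    have hsum : 0 < r * s0 + r0 * s := by positivity
    nlinarith [hsum, hssq, hs0sq, mul_self_le_mul_self hr0.le hr]
  have h1 : 1 / (2 * r0) ≤ 1 / r0 - 1 / (2 * r) := by
    have : 1 / (2 * r) ≤ 1 / (2 * r0) := by
      apply one_div_le_one_div_of_le (by linarith) (by linarith)
    have h2 : 1 / r0 = 1 / (2 * r0) + 1 / (2 * r0) := by ring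
    linarith
  have hfrac : 0 ≤ r / s := le_of_lt (div_pos hrpos hspos)
  have hmain : β / (2 * s0) ≤ β * (r / s) * (1 / r0 - 1 / (2 * r)) := by
    have step1 : β * (r / s) * (1 / (2 * r0)) ≤ β * (r / s) * (1 / r0 - 1 / (2 * r)) := by
      apply mul_le_mul_of_nonneg_left h1 (by positivity)
    have step2 : β * (r0 / s0) * (1 / (2 * r0)) ≤ β * (r / s) * (1 / (2 * r0)) := by
      apply mul_le_mul_of_nonneg_right (mul_le_mul_of_nonneg_left hkey hβ) (by positivity)
    have heq : β * (r0 / s0) * (1 / (2 * r0)) = β / (2 * s0) := by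
      field_simp
    linarith
  have hfirst : 0 ≤ s / (2 * r ^ 2) := by positivity
  linarith
end

section
/- Let μ > 0, v_+ < 0, r_0 > 0, and let A(r) = exp((1/μ)∫_{r_0}^r ψ(s)ds) and B(r) = ∫_r^∞ |f(s)| A(s) ds with ψ continuous, ψ − v_+ ∈ L¹([r_0, ∞)), ψ(r) → v_+ as r → ∞, and f ∈ C¹ with f(r_0) < 0, f′ < 0, f′ ∈ L¹. Then lim_{r→∞} B(r)/A(r) = (μ/|v_+|) lim_{r→∞} |f(r)|, and this limit is a finite positive real number. -/
open MeasureTheory Filter Set intervalIntegral Real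

/-- Bound on interval integrals by the total absolute integral on the tail. -/
lemma aux_tailbound {g : ℝ → ℝ} {r0 : ℝ} (hg : IntegrableOn g (Set.Ici r0))
    {r : ℝ} (hr : r0 ≤ r) :
    |∫ s in r0..r, g s| ≤ ∫ s in Set.Ici r0, |g s| := by
  rw [intervalIntegral.integral_of_le hr]
  calc |∫ s in Set.Ioc r0 r, g s| ≤ ∫ s in Set.Ioc r0 r, |g s| := by
        simpa using norm_integral_le_integral_norm (μ := volume.restrict (Set.Ioc r0 r)) g
    _ ≤ ∫ s in Set.Ici r0, |g s| := by
        apply setIntegral_mono_set hg.abs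
        · filter_upwards with x using abs_nonneg _
        · filter_upwards with x hx using (Set.Icc_subset_Ici_self (Set.Ioc_subset_Icc_self hx))

theorem stmt_14 (μ vp r0 : ℝ) (hμ : 0 < μ) (hvp : vp < 0) (hr0 : 0 < r0)
    (ψ : ℝ → ℝ) (hψc : ContinuousOn ψ (Set.Ici r0))
    (hψint : MeasureTheory.IntegrableOn (fun s => ψ s - vp) (Set.Ici r0))
    (hψlim : Filter.Tendsto ψ Filter.atTop (nhds vp))
    (f f' : ℝ → ℝ) (hf : ∀ r ∈ Set.Ici r0, HasDerivAt f (f' r) r)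
    (hf'c : ContinuousOn f' (Set.Ici r0))
    (hfr0 : f r0 < 0) (hf'neg : ∀ r, r0 < r → f' r < 0)
    (hf'int : MeasureTheory.IntegrableOn f' (Set.Ici r0))
    (A B : ℝ → ℝ)
    (hA : ∀ r, A r = Real.exp ((1 / μ) * ∫ s in r0..r, ψ s))
    (hB : ∀ r, B r = ∫ s in Set.Ici r, |f s| * A s) :
    ∃ L : ℝ, 0 < L ∧ Filter.Tendsto (fun r => |f r|) Filter.atTop (nhds L) ∧
      Filter.Tendsto (fun r => B r / A r) Filter.atTop (nhds (μ / |vp| * L)) ∧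
      0 < μ / |vp| * L := by
  -- basic facts
  have hψiI : ∀ r, r0 ≤ r → IntervalIntegrable ψ volume r0 r := by
    intro r hr
    apply ContinuousOn.intervalIntegrable
    apply hψc.mono
    rw [Set.uIcc_of_le hr]
    exact Set.Icc_subset_Ici_self
  have hf'iI : ∀ r, r0 ≤ r → IntervalIntegrable f' volume r0 r := by
    intro r hr
    apply MeasureTheory.IntegrableOn.intervalIntegrable
    apply hf'int.mono_set
    rw [Set.uIcc_of_le hr]
    exact Set.Icc_subset_Ici_self
  -- f is given by the integral of f'
  have hfeq : ∀ r, r0 ≤ r → f r = f r0 + ∫ s in r0..r, f' s := by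
    intro r hr
    rw [intervalIntegral.integral_eq_sub_of_hasDerivAt
      (fun x hx => hf x (by rw [Set.uIcc_of_le hr] at hx; exact hx.1)) (hf'iI r hr)]
    ring
  -- limit of f
  set l : ℝ := f r0 + ∫ s in Set.Ioi r0, f' s with hl
  have hflim : Filter.Tendsto f Filter.atTop (nhds l) := by
    have h1 : Filter.Tendsto (fun r => f r0 + ∫ s in r0..r, f' s) Filter.atTop (nhds l) :=
      (MeasureTheory.intervalIntegral_tendsto_integral_Ioi r0
        (hf'int.mono_set Set.Ioi_subset_Ici_self) tendsto_id).const_add (f r0)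
    apply h1.congr'
    filter_upwards [Filter.eventually_ge_atTop r0] with r hr using (hfeq r hr).symm
  have hlneg : l < 0 := by
    have : (∫ s in Set.Ioi r0, f' s) ≤ 0 :=
      MeasureTheory.setIntegral_nonpos measurableSet_Ioi (fun x hx => (hf'neg x hx).le)
    linarith
  set L : ℝ := |l| with hL
  have hLpos : 0 < L := abs_pos.mpr hlneg.ne
  have habslim : Filter.Tendsto (fun r => |f r|) Filter.atTop (nhds L) := hflim.abs
  -- uniform bound on |f|
  set Mf : ℝ := |f r0| + ∫ s in Set.Ici r0, |f' s| with hMf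
  have hfbound : ∀ r, r0 ≤ r → |f r| ≤ Mf := by
    intro r hr
    rw [hfeq r hr]
    calc |f r0 + ∫ s in r0..r, f' s| ≤ |f r0| + |∫ s in r0..r, f' s| := abs_add_le _ _
      _ ≤ Mf := by have := aux_tailbound hf'int hr; rw [hMf]; linarith
  -- bound on the primitive of ψ
  set Mp : ℝ := ∫ s in Set.Ici r0, |ψ s - vp| with hMp
  have hΦbound : ∀ r, r0 ≤ r → (∫ s in r0..r, ψ s) ≤ Mp + vp * (r - r0) := by
    intro r hr
    have hsub : (∫ s in r0..r, (ψ s - vp)) = (∫ s in r0..r, ψ s) - vp * (r - r0) := by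
      rw [intervalIntegral.integral_sub (hψiI r hr) intervalIntegrable_const,
        intervalIntegral.integral_const, smul_eq_mul, mul_comm]
    have h2 : |∫ s in r0..r, (ψ s - vp)| ≤ Mp := by simpa using aux_tailbound hψint hr
    rw [hsub] at h2
    have h3 := (abs_le.mp h2).2
    linarith
  -- positivity of A
  have hApos : ∀ r, 0 < A r := by intro r; rw [hA]; exact Real.exp_pos _
  -- A tends to 0
  have hAtends : Filter.Tendsto A Filter.atTop (nhds 0) := by
    have h1 : Filter.Tendsto (fun r => (1 / μ) * ∫ s in r0..r, ψ s) Filter.atTop Filter.atBot := by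
      have h2 : Filter.Tendsto (fun r => (1 / μ) * (Mp + vp * (r - r0))) Filter.atTop
          Filter.atBot := by
        apply Filter.Tendsto.const_mul_atBot (by positivity : (0:ℝ) < 1 / μ)
        apply Filter.tendsto_atBot_add_const_left
        rw [Filter.tendsto_const_mul_atBot_of_neg hvp]
        exact Filter.tendsto_atTop_add_const_right _ (-r0) Filter.tendsto_id |>.congr
          (fun x => by simp [id]; ring)
      apply Filter.tendsto_atBot_mono' Filter.atTop ?_ h2
      filter_upwards [Filter.eventually_ge_atTop r0] with r hr
      have := hΦbound r hr
      have h1μ : (0:ℝ) < 1 / μ := by positivity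
      nlinarith
    have := (Real.tendsto_exp_atBot).comp h1
    apply this.congr
    intro r
    simp [hA r]
  -- continuity of f
  have hfcont : ContinuousOn f (Set.Ici r0) := fun x hx =>
    ((hf x hx).continuousAt).continuousWithinAt
  -- derivative of A
  have hAderiv : ∀ r, r0 < r → HasDerivAt A ((1 / μ) * ψ r * A r) r := by
    intro r hr
    have hΦd : HasDerivAt (fun u => ∫ s in r0..u, ψ s) (ψ r) r := by
      apply intervalIntegral.integral_hasDerivAt_right (hψiI r hr.le)
      · exact ContinuousOn.stronglyMeasurableAtFilter isOpen_Ioi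
          (hψc.mono Set.Ioi_subset_Ici_self) r hr
      · exact hψc.continuousAt (Ici_mem_nhds hr)
    have hd := (hΦd.const_mul (1 / μ)).exp
    have hAe : A = fun u => Real.exp ((1 / μ) * ∫ s in r0..u, ψ s) := funext hA
    rw [hAe]
    convert hd using 1
    beta_reduce
    ring
  have hAcont : ContinuousOn A (Set.Ioi r0) := fun x hx =>
    ((hAderiv x hx).continuousAt).continuousWithinAt
  have hhcontOn : ContinuousOn (fun s => |f s| * A s) (Set.Ioi r0) :=
    (hfcont.mono Set.Ioi_subset_Ici_self).abs.mul hAcont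
  have hhmeas : MeasureTheory.AEStronglyMeasurable (fun s => |f s| * A s)
      (MeasureTheory.volume.restrict (Set.Ici r0)) := by
    have hres : MeasureTheory.volume.restrict (Set.Ici r0)
        = MeasureTheory.volume.restrict (Set.Ioi r0) := by
      apply MeasureTheory.Measure.restrict_congr_set
      exact MeasureTheory.Ioi_ae_eq_Ici.symm
    rw [hres]
    exact hhcontOn.aestronglyMeasurable measurableSet_Ioi
  -- bound on A
  have hAbound : ∀ r, r0 ≤ r → A r ≤ Real.exp (Mp / μ + (vp / μ) * (r - r0)) := by
    intro r hr
    rw [hA r]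
    apply Real.exp_le_exp.mpr
    have h1 := hΦbound r hr
    have h2 : (0:ℝ) < 1 / μ := by positivity
    have h3 : Mp / μ + vp / μ * (r - r0) = (1 / μ) * (Mp + vp * (r - r0)) := by ring
    rw [h3]
    calc (1 / μ) * ∫ s in r0..r, ψ s ≤ (1 / μ) * (Mp + vp * (r - r0)) := by nlinarith
      _ = _ := rfl
  have hMfnn : 0 ≤ Mf := le_trans (abs_nonneg _) (hfbound r0 le_rfl)
  -- integrability of |f| * A
  have hhint : MeasureTheory.IntegrableOn (fun s => |f s| * A s) (Set.Ici r0) := by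
    have hb : (0:ℝ) < -(vp / μ) := by
      have : vp / μ < 0 := div_neg_of_neg_of_pos hvp hμ
      linarith
    have hint0 : MeasureTheory.IntegrableOn
        (fun r => (Mf * Real.exp (Mp / μ - (vp / μ) * r0)) * Real.exp (-(-(vp / μ)) * r))
        (Set.Ici r0) := by
      rw [integrableOn_Ici_iff_integrableOn_Ioi]
      exact (exp_neg_integrableOn_Ioi r0 hb).const_mul _
    apply MeasureTheory.Integrable.mono' hint0 hhmeas
    filter_upwards [MeasureTheory.ae_restrict_mem measurableSet_Ici] with r hr
    have h1 : ‖|f r| * A r‖ = |f r| * A r := by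
      rw [Real.norm_eq_abs, abs_of_nonneg (mul_nonneg (abs_nonneg _) (hApos r).le)]
    rw [h1]
    calc |f r| * A r ≤ Mf * Real.exp (Mp / μ + (vp / μ) * (r - r0)) :=
          mul_le_mul (hfbound r hr) (hAbound r hr) (hApos r).le hMfnn
      _ = (Mf * Real.exp (Mp / μ - (vp / μ) * r0)) * Real.exp (-(-(vp / μ)) * r) := by
          rw [mul_assoc, ← Real.exp_add]; ring_nf
  have hIioi : MeasureTheory.IntegrableOn (fun s => |f s| * A s) (Set.Ioi r0) :=
    hhint.mono_set Set.Ioi_subset_Ici_self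
  -- representation of B
  have hBrepr : ∀ r, r0 ≤ r →
      B r = (∫ s in Set.Ici r0, |f s| * A s) - ∫ s in r0..r, |f s| * A s := by
    intro r hr
    rw [hB r, intervalIntegral.integral_of_le hr, MeasureTheory.integral_Ici_eq_integral_Ioi,
      MeasureTheory.integral_Ici_eq_integral_Ioi]
    have hsplit : (∫ s in Set.Ioi r0, |f s| * A s) =
        (∫ s in Set.Ioc r0 r, |f s| * A s) + ∫ s in Set.Ioi r, |f s| * A s := by
      rw [← MeasureTheory.setIntegral_union (Set.Ioc_disjoint_Ioi le_rfl) measurableSet_Ioi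
        (hhint.mono_set (fun x hx => Set.Icc_subset_Ici_self (Set.Ioc_subset_Icc_self hx)))
        (hhint.mono_set (fun x hx => le_trans hr (le_of_lt hx))),
        Set.Ioc_union_Ioi_eq_Ioi hr]
    linarith
  -- B tends to 0
  have hBtends : Filter.Tendsto B Filter.atTop (nhds 0) := by
    have h1 : Filter.Tendsto
        (fun r => (∫ s in Set.Ici r0, |f s| * A s) - ∫ s in r0..r, |f s| * A s)
        Filter.atTop
        (nhds ((∫ s in Set.Ici r0, |f s| * A s) - ∫ s in Set.Ioi r0, |f s| * A s)) :=
      (MeasureTheory.intervalIntegral_tendsto_integral_Ioi r0 hIioi Filter.tendsto_id).const_sub _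
    have h2 : (∫ s in Set.Ici r0, |f s| * A s) - ∫ s in Set.Ioi r0, |f s| * A s = 0 := by
      rw [MeasureTheory.integral_Ici_eq_integral_Ioi]; exact sub_self _
    rw [h2] at h1
    apply h1.congr'
    filter_upwards [Filter.eventually_ge_atTop r0] with r hr using (hBrepr r hr).symm
  -- derivative of B
  have hBderiv : ∀ r, r0 < r → HasDerivAt B (-(|f r| * A r)) r := by
    intro r hr
    have hiI : IntervalIntegrable (fun s => |f s| * A s) volume r0 r := by
      apply MeasureTheory.IntegrableOn.intervalIntegrable
      apply hhint.mono_set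
      rw [Set.uIcc_of_le hr.le]
      exact Set.Icc_subset_Ici_self
    have hd : HasDerivAt
        (fun u => (∫ s in Set.Ici r0, |f s| * A s) - ∫ s in r0..u, |f s| * A s)
        (-(|f r| * A r)) r := by
      have hh := intervalIntegral.integral_hasDerivAt_right hiI
        (ContinuousOn.stronglyMeasurableAtFilter isOpen_Ioi hhcontOn r hr)
        (hhcontOn.continuousAt (Ioi_mem_nhds hr))
      simpa using hh.const_sub _
    apply hd.congr_of_eventuallyEq
    filter_upwards [Ioi_mem_nhds hr] with u hu
    exact hBrepr u (le_of_lt hu)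
  -- eventual negativity of ψ
  have hψneg : ∀ᶠ r in Filter.atTop, ψ r < 0 :=
    hψlim.eventually_lt_const hvp
  -- conclusion via l'Hôpital
  have hvpne : vp ≠ 0 := ne_of_lt hvp
  have hμne : μ ≠ 0 := ne_of_gt hμ
  refine ⟨L, hLpos, habslim, ?_, by positivity⟩
  apply HasDerivAt.lhopital_zero_atTop
    (f' := fun r => -(|f r| * A r)) (g' := fun r => (1 / μ) * ψ r * A r)
  · filter_upwards [Filter.eventually_gt_atTop r0] with r hr using hBderiv r hr
  · filter_upwards [Filter.eventually_gt_atTop r0] with r hr using hAderiv r hr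
  · filter_upwards [hψneg] with r hr
    have h1 : (1 / μ) * ψ r * A r < 0 := by
      have := hApos r
      have : (1 / μ) * ψ r < 0 := by
        apply mul_neg_of_pos_of_neg (by positivity) hr
      exact mul_neg_of_neg_of_pos this (hApos r)
    exact ne_of_lt h1
  · exact hBtends
  · exact hAtends
  · have hEq : ∀ᶠ r in Filter.atTop,
        (-|f r|) / ((1 / μ) * ψ r) = (-(|f r| * A r)) / ((1 / μ) * ψ r * A r) := by
      filter_upwards with r
      rw [show -(|f r| * A r) = (-|f r|) * A r by ring,
        mul_div_mul_right _ _ (ne_of_gt (hApos r))]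
    have hnum : Filter.Tendsto (fun r => -|f r|) Filter.atTop (nhds (-L)) := habslim.neg
    have hden : Filter.Tendsto (fun r => (1 / μ) * ψ r) Filter.atTop (nhds ((1 / μ) * vp)) :=
      hψlim.const_mul _
    have hden0 : (1 / μ) * vp ≠ 0 := mul_ne_zero (by positivity) hvpne
    have hlim := (hnum.div hden hden0).congr' hEq
    have hval : (-L) / ((1 / μ) * vp) = μ / |vp| * L := by
      rw [abs_of_neg hvp]
      have h4 : -vp ≠ 0 := by simpa using hvpne
      field_simp
    rwa [hval] at hlim
end

section
/- Let μ > 0 and let v, φ : D → ℝ with D = (0,∞) × (r_0, ∞), where v(t,r) solves v_t + (v²/2)_r = μ(v_{rr} + (n−1)(v/r)_r) and φ(r) solves the stationary equation (φ²/2)′ = μ(φ″ + (n−1)(φ/r)′) with φ(r) → v_+ at infinity. Set ψ(r) = φ(r) − μ(n−1)/r and w(t,r) = −∫_r^∞ (v(t,y) − φ(y)) dy (assuming v − φ and its relevant derivatives decay at infinity so that all integrals converge and boundary terms at infinity vanish). Then w satisfies w_t + ψ w_r − μ w_{rr} = −(1/2) w_r², for t > 0 and r > r_0. -/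
/-!
The radial Burgers equation is in conservation form, `v_t = ∂_r Φ[v]` with flux
`Φ[u] = -u²/2 + μ u_r + μ (n-1) u / r`, and the stationary equation says `∂_r Φ[φ] = 0`.
Hence `Φ[v(t,·)] - Φ[φ]` is an antiderivative of `v_t` in `r` which vanishes at infinity, so
`w_t(t,r) = -∫_r^∞ v_t = Φ[v(t,·)](r) - Φ[φ](r)`. Expanding the flux difference around `φ` gives
exactly `-(1/2) w_r² - ψ w_r + μ w_rr` with `w_r = v - φ`.
-/

open MeasureTheory Filter Set Topology

/-- `c` plays the role of `n - 1`; `u'` stands for the `r`-derivative of `u`. -/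
noncomputable def radialBurgersFlux (μ c : ℝ) (u u' : ℝ → ℝ) (r : ℝ) : ℝ :=
  -(1 / 2) * u r ^ 2 + μ * u' r + μ * c * (u r / r)

theorem radialBurgersFlux_sub (μ c : ℝ) (u u' φ φ' : ℝ → ℝ) (r : ℝ) :
    radialBurgersFlux μ c u u' r - radialBurgersFlux μ c φ φ' r =
      -(1 / 2) * (u r - φ r) ^ 2 - (φ r - μ * c / r) * (u r - φ r) + μ * (u' r - φ' r) := by
  unfold radialBurgersFlux
  ring

theorem hasDerivAt_radialBurgersFlux (μ c : ℝ) {u u' : ℝ → ℝ} {x a b : ℝ}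
    (hu : HasDerivAt u a x) (hu' : HasDerivAt u' b x) (hx : x ≠ 0) :
    HasDerivAt (radialBurgersFlux μ c u u')
      (-(u x * a) + μ * (b + c * (a / x - u x / x ^ 2))) x := by
  have h := (((hu.pow 2).const_mul (-(1 / 2))).add (hu'.const_mul μ)).add
    ((hu.div (hasDerivAt_id x) hx).const_mul (μ * c))
  refine h.congr_deriv ?_
  simp only [id]
  field_simp
  ring

theorem tendsto_radialBurgersFlux_sub_atTop (μ c : ℝ) {u u' φ φ' : ℝ → ℝ} {L : ℝ}
    (hφ : Tendsto φ atTop (𝓝 L)) (hu : Tendsto (fun y => u y - φ y) atTop (𝓝 0))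
    (hu' : Tendsto (fun y => u' y - φ' y) atTop (𝓝 0)) :
    Tendsto (fun y => radialBurgersFlux μ c u u' y - radialBurgersFlux μ c φ φ' y)
      atTop (𝓝 0) := by
  simp_rw [radialBurgersFlux_sub]
  have hψ : Tendsto (fun y => φ y - μ * c / y) atTop (𝓝 (L - 0)) :=
    hφ.sub (tendsto_const_nhds.div_atTop tendsto_id)
  convert (((hu.pow 2).const_mul (-(1 / 2))).sub (hψ.mul hu)).add (hu'.const_mul μ) using 2
  simp

theorem integral_Ici_eq_neg_of_hasDerivAt_of_tendsto_zero {f F : ℝ → ℝ} {r : ℝ}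
    (hF : ∀ x ∈ Ici r, HasDerivAt F (f x) x) (hf : IntegrableOn f (Ici r))
    (hlim : Tendsto F atTop (𝓝 0)) :
    ∫ y in Ici r, f y = -F r := by
  rw [integral_Ici_eq_integral_Ioi,
    integral_Ioi_of_hasDerivAt_of_tendsto' hF (hf.mono_set Ioi_subset_Ici_self) hlim, zero_sub]

theorem stmt_16_general (n : ℕ) (μ r0 vp : ℝ) (hr0 : 0 < r0)
    (v vt vr vrr : ℝ → ℝ → ℝ) (φ φ' φ'' : ℝ → ℝ)
    (hvr : ∀ t r, 0 < t → r0 < r → HasDerivAt (fun y => v t y) (vr t r) r)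
    (hvrr : ∀ t r, 0 < t → r0 < r → HasDerivAt (fun y => vr t y) (vrr t r) r)
    (hφ : ∀ r, r0 < r → HasDerivAt φ (φ' r) r)
    (hφ' : ∀ r, r0 < r → HasDerivAt φ' (φ'' r) r)
    (hφlim : Filter.Tendsto φ Filter.atTop (nhds vp))
    (hPDE : ∀ t r, 0 < t → r0 < r →
      vt t r + v t r * vr t r =
        μ * (vrr t r + ((n : ℝ) - 1) * (vr t r / r - v t r / r ^ 2)))
    (hSW : ∀ r, r0 < r →
      φ r * φ' r = μ * (φ'' r + ((n : ℝ) - 1) * (φ' r / r - φ r / r ^ 2)))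
    (hdecay : ∀ t, 0 < t → Filter.Tendsto (fun y => v t y - φ y) Filter.atTop (nhds 0))
    (hdecay' : ∀ t, 0 < t → Filter.Tendsto (fun y => vr t y - φ' y) Filter.atTop (nhds 0))
    (hvtint : ∀ t r, 0 < t → r0 < r →
      MeasureTheory.IntegrableOn (fun y => vt t y) (Set.Ici r))
    (wt : ℝ → ℝ → ℝ)
    (hwt : ∀ t r, 0 < t → r0 < r → wt t r = -∫ y in Set.Ici r, vt t y) :
    ∀ t r, 0 < t → r0 < r →
      wt t r + (φ r - μ * ((n : ℝ) - 1) / r) * (v t r - φ r) - μ * (vr t r - φ' r) =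
        -(1 / 2) * (v t r - φ r) ^ 2 := by
  intro t r ht hr
  let F := fun y => radialBurgersFlux μ ((n : ℝ) - 1) (v t) (vr t) y -
    radialBurgersFlux μ ((n : ℝ) - 1) φ φ' y
  have hF : ∀ x ∈ Ici r, HasDerivAt F (vt t x) x := by
    intro x hx
    have hx' : r0 < x := hr.trans_le hx
    have hx0 : x ≠ 0 := (hr0.trans hx').ne'
    refine ((hasDerivAt_radialBurgersFlux μ _ (hvr t x ht hx') (hvrr t x ht hx') hx0).sub
      (hasDerivAt_radialBurgersFlux μ _ (hφ x hx') (hφ' x hx') hx0)).congr_deriv ?_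
    linear_combination hSW x hx' - hPDE t x ht hx'
  have hlim : Tendsto F atTop (𝓝 0) :=
    tendsto_radialBurgersFlux_sub_atTop μ _ hφlim (hdecay t ht) (hdecay' t ht)
  rw [hwt t r ht hr, integral_Ici_eq_neg_of_hasDerivAt_of_tendsto_zero hF (hvtint t r ht hr) hlim,
    neg_neg]
  simp only [F, radialBurgersFlux_sub]
  ring

theorem stmt_16 (n : ℕ) (hn : 3 ≤ n) (μ r0 vp : ℝ) (hμ : 0 < μ) (hr0 : 0 < r0)
    (v vt vr vrr : ℝ → ℝ → ℝ) (φ φ' φ'' : ℝ → ℝ)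
    (hvt : ∀ t r, 0 < t → r0 < r → HasDerivAt (fun s => v s r) (vt t r) t)
    (hvr : ∀ t r, 0 < t → r0 < r → HasDerivAt (fun y => v t y) (vr t r) r)
    (hvrr : ∀ t r, 0 < t → r0 < r → HasDerivAt (fun y => vr t y) (vrr t r) r)
    (hφ : ∀ r, r0 < r → HasDerivAt φ (φ' r) r)
    (hφ' : ∀ r, r0 < r → HasDerivAt φ' (φ'' r) r)
    (hφlim : Filter.Tendsto φ Filter.atTop (nhds vp))
    (hPDE : ∀ t r, 0 < t → r0 < r →
      vt t r + v t r * vr t r =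
        μ * (vrr t r + ((n : ℝ) - 1) * (vr t r / r - v t r / r ^ 2)))
    (hSW : ∀ r, r0 < r →
      φ r * φ' r = μ * (φ'' r + ((n : ℝ) - 1) * (φ' r / r - φ r / r ^ 2)))
    (hdecay : ∀ t, 0 < t → Filter.Tendsto (fun y => v t y - φ y) Filter.atTop (nhds 0))
    (hdecay' : ∀ t, 0 < t → Filter.Tendsto (fun y => vr t y - φ' y) Filter.atTop (nhds 0))
    (hint : ∀ t r, 0 < t → r0 < r →
      MeasureTheory.IntegrableOn (fun y => v t y - φ y) (Set.Ici r))
    (hvtint : ∀ t r, 0 < t → r0 < r →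
      MeasureTheory.IntegrableOn (fun y => vt t y) (Set.Ici r))
    (w wt : ℝ → ℝ → ℝ)
    (hw : ∀ t r, w t r = -∫ y in Set.Ici r, (v t y - φ y))
    (hwt : ∀ t r, 0 < t → r0 < r → wt t r = -∫ y in Set.Ici r, vt t y) :
    ∀ t r, 0 < t → r0 < r →
      wt t r + (φ r - μ * ((n : ℝ) - 1) / r) * (v t r - φ r) - μ * (vr t r - φ' r) =
        -(1 / 2) * (v t r - φ r) ^ 2 :=
  stmt_16_general n μ r0 vp hr0 v vt vr vrr φ φ' φ'' hvr hvrr hφ hφ' hφlim hPDE hSW hdecay hdecay'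
    hvtint wt hwt
end

section
/- Let μ > 0, r_0 > 0, and let w(t,·) and ψ, χ be smooth on [r_0, ∞) with χ′ + (ψ/μ)χ = 1/r − 2/r_0 on (r_0, ∞). If w solves w_t + ψ w_r − μ w_{rr} = −(1/2) w_r², then pointwise (for t > 0, r > r_0): ∂_t((1/2) χ w²) + (μ/2)(w²/r²) + μ χ w_r² − μ ∂_r(χ w w_r + (1/r_0 − 1/(2r)) w²) = −(1/2) χ w w_r². -/
theorem stmt_17 (μ r0 : ℝ) (hμ : 0 < μ) (hr0 : 0 < r0)
    (ψ χ χ' : ℝ → ℝ)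
    (hχ : ∀ r, r0 < r → HasDerivAt χ (χ' r) r)
    (hODE : ∀ r, r0 < r → χ' r + (ψ r / μ) * χ r = 1 / r - 2 / r0)
    (w wt wr wrr : ℝ → ℝ → ℝ)
    (hwt : ∀ t r, 0 < t → r0 < r → HasDerivAt (fun s => w s r) (wt t r) t)
    (hwr : ∀ t r, 0 < t → r0 < r → HasDerivAt (fun y => w t y) (wr t r) r)
    (hwrr : ∀ t r, 0 < t → r0 < r → HasDerivAt (fun y => wr t y) (wrr t r) r)
    (heq : ∀ t r, 0 < t → r0 < r →
      wt t r + ψ r * wr t r - μ * wrr t r = -(1 / 2) * (wr t r) ^ 2) :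
    ∀ t r, 0 < t → r0 < r →
      χ r * w t r * wt t r + (μ / 2) * (w t r) ^ 2 / r ^ 2 + μ * χ r * (wr t r) ^ 2 -
        μ * (χ' r * w t r * wr t r + χ r * (wr t r) ^ 2 + χ r * w t r * wrr t r +
          (1 / (2 * r ^ 2)) * (w t r) ^ 2 + (2 / r0 - 1 / r) * w t r * wr t r) =
      -(1 / 2) * χ r * w t r * (wr t r) ^ 2 := by
  intro t r ht hr
  have h1 := heq t r ht hr
  have h2 := hODE r hr
  have hμ' : μ ≠ 0 := ne_of_gt hμ
  have h2' : μ * χ' r + ψ r * χ r = μ * (1 / r - 2 / r0) := by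
    field_simp at h2 ⊢; linarith
  linear_combination (χ r * w t r) * h1 - (w t r * wr t r) * h2'
end
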